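/- Let G^p = (A, R, p) be a finite probabilistic argument graph with p : A → [0,1], and let E ⊆ A be conflict-free. Let E⁺ = {β ∈ A | ∃α ∈ E, (α, β) ∈ R} and E⁻ = {β ∈ A | ∃α ∈ E, (β, α) ∈ R}. Then the probability that E is the grounded extension satisfies p(E^gr) = p(E^co) · P_GR, where P_GR = Σ over all B'' ⊆ E⁺ ∩ E⁻ such that E is the grounded extension of the induced subgraph G↾(E ∪ B''), of (Π_{α ∈ B''} p(α)) · (Π_{β ∈ (E⁺ ∩ E⁻) \ B''} (1 − p(β))); here p(E^σ) = Σ_{A' ⊆ A, E is a σ-extension of G↾A'} (Π_{α ∈ A'} p(α)) · (Π_{α ∈ A \ A'} (1 − p(α))) for σ the grounded (respectively complete) semantics. -/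

import Mathlib

open scoped Classical

variable {α : Type*} [DecidableEq α]

/-- `E` is conflict-free w.r.t. attack relation `R`. -/
def ConflictFree (R : α → α → Prop) (E : Finset α) : Prop :=
  ∀ a ∈ E, ∀ b ∈ E, ¬ R a b

/-- `a` is acceptable with respect to `E` under attack relation `R`. -/
def Acceptable (R : α → α → Prop) (E : Finset α) (a : α) : Prop :=
  ∀ b, R b a → ∃ c ∈ E, R c b

/-- The attack relation of the induced subgraph on `A'`: `R ∩ (A' × A')`. -/
def Restrict (A' : Finset α) (R : α → α → Prop) : α → α → Prop :=
  fun a b => a ∈ A' ∧ b ∈ A' ∧ R a b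

/-- `E` is an admissible set of the induced subgraph on `A'`. -/
def AdmissibleIn (A' : Finset α) (R : α → α → Prop) (E : Finset α) : Prop :=
  E ⊆ A' ∧ ConflictFree (Restrict A' R) E ∧
    ∀ a ∈ E, Acceptable (Restrict A' R) E a

/-- `E` is a complete extension of the induced subgraph on `A'`. -/
def CompleteIn (A' : Finset α) (R : α → α → Prop) (E : Finset α) : Prop :=
  AdmissibleIn A' R E ∧ ∀ a ∈ A', Acceptable (Restrict A' R) E a → a ∈ E

/-- `E` is a stable extension of the induced subgraph on `A'`. -/
def StableIn (A' : Finset α) (R : α → α → Prop) (E : Finset α) : Prop :=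
  E ⊆ A' ∧ ConflictFree (Restrict A' R) E ∧
    ∀ a ∈ A', a ∉ E → ∃ c ∈ E, Restrict A' R c a

/-- `E` is a preferred extension (⊆-maximal admissible set) of the induced subgraph on `A'`. -/
def PreferredIn (A' : Finset α) (R : α → α → Prop) (E : Finset α) : Prop :=
  AdmissibleIn A' R E ∧ ∀ F : Finset α, AdmissibleIn A' R F → E ⊆ F → F = E

/-- `E` is the grounded extension (⊆-least complete extension) of the induced subgraph on `A'`. -/
def GroundedIn (A' : Finset α) (R : α → α → Prop) (E : Finset α) : Prop :=
  CompleteIn A' R E ∧ ∀ F : Finset α, CompleteIn A' R F → E ⊆ F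

/-!
Let `C = E⁺ ∩ E⁻`. Every argument of `C` is attacked by the conflict-free set `E`, so adding
arguments of `C` to a subgraph never changes whether `E` is complete. Whether a complete `E` is
moreover grounded is decided by Dung's characteristic function on subsets of `E`, and there it
only sees the attackers of `E` that `E` counter-attacks, which all lie in `C`. So for
`A' = S ∪ T` with `S ⊆ A \ C` and `T ⊆ C`, `E` is grounded in `G↾A'` iff it is complete in `G↾S`
and grounded in `G↾(E ∪ T)`; as `p(G↾A')` factors over this splitting, so does the sum, and the
unconstrained sum over `T` is `1`.
-/

set_option linter.unusedSectionVars false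

open Finset

variable {r : α → α → Prop} {X B E S T s t : Finset α}

theorem Acceptable.mono {a : α} (hST : S ⊆ T) (ha : Acceptable r S a) : Acceptable r T a :=
  fun b hb => (ha b hb).imp fun _ ⟨hc, hcb⟩ => ⟨hST hc, hcb⟩

theorem ConflictFree.mono (hT : ConflictFree r T) (hST : S ⊆ T) : ConflictFree r S :=
  fun a ha b hb => hT a (hST ha) b (hST hb)

theorem ConflictFree.restrict (hE : ConflictFree r E) : ConflictFree (Restrict X r) E :=
  fun a ha b hb hab => hE a ha b hb hab.2.2

theorem Monotone.exists_fixed_le_of_map_le {β : Type*} [PartialOrder β] [WellFoundedLT β]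
    {f : β → β} (hf : Monotone f) {x : β} (hx : f x ≤ x) : ∃ y ≤ x, f y = y := by
  induction x using WellFoundedLT.induction with
  | _ x ih =>
    obtain hfx | hfx := hx.eq_or_lt
    · exact ⟨x, le_rfl, hfx⟩
    · obtain ⟨y, hy, hfy⟩ := ih (f x) hfx (hf hx)
      exact ⟨y, hy.trans hx, hfy⟩

/-- Dung's characteristic function of the induced subgraph on `X`. -/
noncomputable def defendedIn (X : Finset α) (r : α → α → Prop) (S : Finset α) : Finset α :=
  X.filter (Acceptable (Restrict X r) S)

theorem mem_defendedIn {a : α} :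
    a ∈ defendedIn X r S ↔ a ∈ X ∧ Acceptable (Restrict X r) S a :=
  mem_filter

theorem defendedIn_mono : Monotone (defendedIn X r) := fun _ _ hST _ ha =>
  mem_defendedIn.2 ⟨(mem_defendedIn.1 ha).1, (mem_defendedIn.1 ha).2.mono hST⟩

theorem completeIn_iff_defendedIn_eq :
    CompleteIn X r E ↔ ConflictFree (Restrict X r) E ∧ defendedIn X r E = E := by
  constructor
  · rintro ⟨⟨hEX, hcf, hacc⟩, hmax⟩
    refine ⟨hcf, ext fun a => ?_⟩
    rw [mem_defendedIn]
    exact ⟨fun ha => hmax a ha.1 ha.2, fun ha => ⟨hEX ha, hacc a ha⟩⟩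
  · rintro ⟨hcf, hE⟩
    refine ⟨⟨hE ▸ filter_subset _ _, hcf, fun a ha => ?_⟩, fun a ha hacc => ?_⟩
    · exact (mem_defendedIn.1 (hE.symm.subset ha)).2
    · exact hE.subset (mem_defendedIn.2 ⟨ha, hacc⟩)

theorem CompleteIn.defendedIn_subset (hE : CompleteIn X r E) (hS : S ⊆ E) :
    defendedIn X r S ⊆ E :=
  (completeIn_iff_defendedIn_eq.1 hE).2 ▸ defendedIn_mono hS

theorem groundedIn_iff_forall_defendedIn_subset :
    GroundedIn X r E ↔ CompleteIn X r E ∧ ∀ S ⊆ E, defendedIn X r S ⊆ S → E ⊆ S := by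
  refine and_congr_right fun hE => ⟨fun hleast S hSE hS => ?_, fun hpre F hF => ?_⟩
  · -- a fixed point of `defendedIn` below `E` is conflict-free, hence complete
    obtain ⟨T, hTS, hT⟩ := defendedIn_mono.exists_fixed_le_of_map_le hS
    have hTcf : ConflictFree (Restrict X r) T := hE.1.2.1.mono (hTS.trans hSE)
    exact (hleast T (completeIn_iff_defendedIn_eq.2 ⟨hTcf, hT⟩)).trans hTS
  · refine (hpre (E ∩ F) inter_subset_left ?_).trans inter_subset_right
    exact subset_inter (hE.defendedIn_subset inter_subset_left)
      (hF.defendedIn_subset inter_subset_right)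

theorem completeIn_iff_of_conflictFree (hcf : ConflictFree r E) :
    CompleteIn X r E ↔ defendedIn X r E = E := by
  rw [completeIn_iff_defendedIn_eq, and_iff_right hcf.restrict]

theorem completeIn_self (hcf : ConflictFree r E) : CompleteIn E r E :=
  (completeIn_iff_of_conflictFree hcf).2 <| ext fun a => by
    rw [mem_defendedIn, and_iff_left_iff_imp]
    exact fun ha b hba => (hcf b hba.1 a ha hba.2.2).elim

theorem not_acceptable_of_attacked (hcf : ConflictFree r E) {a e : α} (he : e ∈ E) (heX : e ∈ X)
    (haX : a ∈ X) (hea : r e a) : ¬ Acceptable (Restrict X r) E a := fun hacc =>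
  have ⟨c, hc, hce⟩ := hacc e ⟨heX, haX, hea⟩
  hcf c hc e he hce.2.2

theorem defendedIn_union_of_attacked (hcf : ConflictFree r E) (ht : ∀ b ∈ t, ∃ e ∈ E, r e b)
    (hEs : E ⊆ s) : defendedIn (s ∪ t) r E = defendedIn s r E := by
  ext a
  simp only [mem_defendedIn, mem_union]
  constructor
  · rintro ⟨has | hat, hacc⟩
    · refine ⟨has, fun b hba => ?_⟩
      obtain ⟨c, hc, hcb⟩ := hacc b ⟨mem_union_left t hba.1, mem_union_left t has, hba.2.2⟩
      exact ⟨c, hc, hEs hc, hba.1, hcb.2.2⟩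
    · obtain ⟨e, he, hea⟩ := ht a hat
      exact (not_acceptable_of_attacked hcf he (mem_union_left t (hEs he))
        (mem_union_right s hat) hea hacc).elim
  · rintro ⟨has, hacc⟩
    refine ⟨.inl has, fun b ⟨hb, _, hba⟩ => ?_⟩
    obtain hbs | hbt := mem_union.1 hb
    · obtain ⟨c, hc, hcb⟩ := hacc b ⟨hbs, has, hba⟩
      exact ⟨c, hc, mem_union_left t hcb.1, hb, hcb.2.2⟩
    · obtain ⟨e, he, heb⟩ := ht b hbt
      exact ⟨e, he, mem_union_left t (hEs he), hb, heb⟩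

theorem completeIn_union_of_attacked_iff (hcf : ConflictFree r E)
    (ht : ∀ b ∈ t, ∃ e ∈ E, r e b) : CompleteIn (s ∪ t) r E ↔ CompleteIn s r E := by
  by_cases hEs : E ⊆ s
  · rw [completeIn_iff_of_conflictFree hcf, completeIn_iff_of_conflictFree hcf,
      defendedIn_union_of_attacked hcf ht hEs]
  · refine iff_of_false (fun h => hEs fun e he => ?_) (fun h => hEs h.1.1)
    obtain hes | het := mem_union.1 (h.1.1 he)
    · exact hes
    · obtain ⟨c, hc, hce⟩ := ht e het
      exact (hcf c hc e he hce).elim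

theorem defendedIn_eq_of_completeIn_of_subset (hBX : B ⊆ X)
    (hB : ∀ b ∈ X, (∃ e ∈ E, r b e) → (∃ e ∈ E, r e b) → b ∈ B)
    (hX : CompleteIn X r E) (hEB : CompleteIn B r E) (hS : S ⊆ E) :
    defendedIn X r S = defendedIn B r S := by
  ext a
  constructor
  · intro ha
    have haE := hX.defendedIn_subset hS ha
    refine mem_defendedIn.2 ⟨hEB.1.1 haE, fun b ⟨hb, _, hba⟩ => ?_⟩
    obtain ⟨c, hc, hcb⟩ := (mem_defendedIn.1 ha).2 b ⟨hBX hb, hX.1.1 haE, hba⟩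
    exact ⟨c, hc, hEB.1.1 (hS hc), hb, hcb.2.2⟩
  · intro ha
    have haE := hEB.defendedIn_subset hS ha
    refine mem_defendedIn.2 ⟨hX.1.1 haE, fun b ⟨hb, _, hba⟩ => ?_⟩
    -- `b` attacks `E` and, `E` being admissible in `X`, is attacked by `E`; so `b ∈ B`
    obtain ⟨e, he, heb⟩ := hX.1.2.2 a haE b ⟨hb, hX.1.1 haE, hba⟩
    have hbB := hB b hb ⟨a, haE, hba⟩ ⟨e, he, heb.2.2⟩
    obtain ⟨c, hc, hcb⟩ := (mem_defendedIn.1 ha).2 b ⟨hbB, hEB.1.1 haE, hba⟩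
    exact ⟨c, hc, hX.1.1 (hS hc), hb, hcb.2.2⟩

theorem groundedIn_iff_of_completeIn_of_subset (hBX : B ⊆ X)
    (hB : ∀ b ∈ X, (∃ e ∈ E, r b e) → (∃ e ∈ E, r e b) → b ∈ B)
    (hX : CompleteIn X r E) (hEB : CompleteIn B r E) :
    GroundedIn X r E ↔ GroundedIn B r E := by
  rw [groundedIn_iff_forall_defendedIn_subset, groundedIn_iff_forall_defendedIn_subset,
    and_iff_right hX, and_iff_right hEB]
  refine forall₂_congr fun S hS => ?_
  rw [defendedIn_eq_of_completeIn_of_subset hBX hB hX hEB hS]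

theorem groundedIn_union_of_attacked_iff (hcf : ConflictFree r E)
    (ht : ∀ b ∈ t, ∃ e ∈ E, r e b)
    (hs : ∀ b ∈ s, (∃ e ∈ E, r b e) → (∃ e ∈ E, r e b) → b ∈ t) :
    GroundedIn (s ∪ t) r E ↔ CompleteIn s r E ∧ GroundedIn (E ∪ t) r E := by
  by_cases hE : CompleteIn s r E
  · rw [and_iff_right hE]
    refine groundedIn_iff_of_completeIn_of_subset (union_subset_union_left hE.1.1)
      (fun b hb h₁ h₂ => mem_union_right E ?_)
      ((completeIn_union_of_attacked_iff hcf ht).2 hE)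
      ((completeIn_union_of_attacked_iff hcf ht).2 (completeIn_self hcf))
    exact (mem_union.1 hb).elim (hs b · h₁ h₂) id
  · exact iff_of_false (fun h => hE ((completeIn_union_of_attacked_iff hcf ht).1 h.1))
      (fun h => hE h.1)

theorem sum_powerset_union {β : Type*} [AddCommMonoid β] {U V : Finset α} (hUV : Disjoint U V)
    (g : Finset α → β) :
    ∑ Y ∈ (U ∪ V).powerset, g Y = ∑ s ∈ U.powerset, ∑ t ∈ V.powerset, g (s ∪ t) := by
  rw [← sum_product']
  refine sum_nbij' (fun Y => (Y ∩ U, Y ∩ V)) (fun st => st.1 ∪ st.2) ?_ ?_ ?_ ?_ (fun _ _ => ?_)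
  all_goals simp only [mem_product, mem_powerset]
  · exact fun _ _ => ⟨inter_subset_right, inter_subset_right⟩
  · exact fun _ h => union_subset_union h.1 h.2
  · exact fun _ h => by rw [← inter_union_distrib_left, inter_eq_left.2 h]
  · rintro ⟨s, t⟩ ⟨hs, ht⟩
    dsimp only at hs ht ⊢
    rw [union_inter_distrib_right, union_inter_distrib_right, inter_eq_left.2 hs,
      inter_eq_left.2 ht, disjoint_iff_inter_eq_empty.1 (hUV.symm.mono_left ht),
      disjoint_iff_inter_eq_empty.1 (hUV.mono_left hs),
      union_empty, empty_union]
  · rw [← inter_union_distrib_left, inter_eq_left.2 (mem_powerset.1 ‹_›)]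

/-- `subgraphProb p X Y` is the probability `p(G↾Y)` of the induced subgraph on `Y ⊆ X`. -/
def subgraphProb (p : α → ℝ) (X Y : Finset α) : ℝ :=
  (∏ a ∈ Y, p a) * ∏ a ∈ X \ Y, (1 - p a)

theorem sum_subgraphProb_powerset (p : α → ℝ) (X : Finset α) :
    ∑ Y ∈ X.powerset, subgraphProb p X Y = 1 := by
  simp only [subgraphProb, ← prod_add, add_sub_cancel, prod_const_one]

theorem subgraphProb_union (p : α → ℝ) {U V : Finset α} (hUV : Disjoint U V) (hs : s ⊆ U)
    (ht : t ⊆ V) : subgraphProb p (U ∪ V) (s ∪ t) = subgraphProb p U s * subgraphProb p V t := by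
  have hsdiff : (U ∪ V) \ (s ∪ t) = U \ s ∪ V \ t := by
    ext a
    have := disjoint_left.1 hUV
    simp only [mem_union, mem_sdiff]
    grind
  rw [subgraphProb, hsdiff, prod_union (hUV.mono hs ht),
    prod_union (hUV.mono sdiff_subset sdiff_subset), subgraphProb, subgraphProb]
  ring

theorem sum_filter_subgraphProb_union (p : α → ℝ) {U V : Finset α} (hUV : Disjoint U V)
    {P Q Q' : Finset α → Prop} (h : ∀ s ⊆ U, ∀ t ⊆ V, P (s ∪ t) ↔ Q s ∧ Q' t) :
    ∑ Y ∈ (U ∪ V).powerset.filter P, subgraphProb p (U ∪ V) Y =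
      (∑ s ∈ U.powerset.filter Q, subgraphProb p U s) *
        ∑ t ∈ V.powerset.filter Q', subgraphProb p V t := by
  rw [sum_filter, sum_powerset_union hUV, sum_filter, sum_filter, sum_mul_sum]
  refine sum_congr rfl fun s hs => sum_congr rfl fun t ht => ?_
  rw [mem_powerset] at hs ht
  rw [ite_zero_mul_ite_zero, subgraphProb_union p hUV hs ht]
  exact if_congr (h s hs t ht) rfl rfl

theorem stmt12_general (A : Finset α) (R : Finset (α × α))
    (p : α → ℝ)
    (E : Finset α)
    (hcf : ConflictFree (fun a b => (a, b) ∈ R) E)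
    (Eplus Eminus : Finset α)
    (hEp : Eplus = A.filter (fun b => ∃ a ∈ E, (a, b) ∈ R))
    (hEm : Eminus = A.filter (fun b => ∃ a ∈ E, (b, a) ∈ R)) :
    ∑ A' ∈ A.powerset.filter
        (fun A' => GroundedIn A' (fun a b => (a, b) ∈ R) E),
        (∏ a ∈ A', p a) * ∏ a ∈ A \ A', (1 - p a)
      = (∑ A' ∈ A.powerset.filter
            (fun A' => CompleteIn A' (fun a b => (a, b) ∈ R) E),
            (∏ a ∈ A', p a) * ∏ a ∈ A \ A', (1 - p a)) *
        ∑ B'' ∈ (Eplus ∩ Eminus).powerset.filter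
            (fun B'' => GroundedIn (E ∪ B'') (fun a b => (a, b) ∈ R) E),
            (∏ a ∈ B'', p a) * ∏ b ∈ (Eplus ∩ Eminus) \ B'', (1 - p b) := by
  subst hEp hEm
  set C := A.filter (fun b => ∃ a ∈ E, (a, b) ∈ R) ∩ A.filter (fun b => ∃ a ∈ E, (b, a) ∈ R)
  have hCA : C ⊆ A := inter_subset_left.trans (filter_subset _ _)
  have hC : ∀ b ∈ C, ∃ e ∈ E, (e, b) ∈ R := fun b hb => (mem_filter.1 (mem_inter.1 hb).1).2
  have hAC : ∀ b ∈ A \ C, (∃ e ∈ E, (b, e) ∈ R) → (∃ e ∈ E, (e, b) ∈ R) → False :=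
    fun b hb h₁ h₂ => (mem_sdiff.1 hb).2 (by simp [C, (mem_sdiff.1 hb).1, h₁, h₂])
  have hA : A \ C ∪ C = A := sdiff_union_of_subset hCA
  have hdisj : Disjoint (A \ C) C := sdiff_disjoint
  have hgr := sum_filter_subgraphProb_union p hdisj
    (P := fun A' => GroundedIn A' (fun a b => (a, b) ∈ R) E)
    fun s hs t ht => groundedIn_union_of_attacked_iff hcf (fun b hb => hC b (ht hb))
      fun b hb h₁ h₂ => (hAC b (hs hb) h₁ h₂).elim
  have hco := sum_filter_subgraphProb_union p hdisj
    (P := fun A' => CompleteIn A' (fun a b => (a, b) ∈ R) E)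
    (Q := fun s => CompleteIn s (fun a b => (a, b) ∈ R) E) (Q' := fun _ => True)
    fun s _ t ht => (completeIn_union_of_attacked_iff hcf (fun b hb => hC b (ht hb))).trans
      (and_iff_left trivial).symm
  rw [filter_true, sum_subgraphProb_powerset, mul_one, hA] at hco
  rw [hA] at hgr
  simp only [subgraphProb] at hgr hco
  rw [hgr, hco]

theorem stmt12 (A : Finset α) (R : Finset (α × α)) (hRA : R ⊆ A ×ˢ A)
    (p : α → ℝ) (hp : ∀ a ∈ A, 0 ≤ p a ∧ p a ≤ 1)
    (E : Finset α) (hEA : E ⊆ A)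
    (hcf : ConflictFree (fun a b => (a, b) ∈ R) E)
    (Eplus Eminus : Finset α)
    (hEp : Eplus = A.filter (fun b => ∃ a ∈ E, (a, b) ∈ R))
    (hEm : Eminus = A.filter (fun b => ∃ a ∈ E, (b, a) ∈ R)) :
    ∑ A' ∈ A.powerset.filter
        (fun A' => GroundedIn A' (fun a b => (a, b) ∈ R) E),
        (∏ a ∈ A', p a) * ∏ a ∈ A \ A', (1 - p a)
      = (∑ A' ∈ A.powerset.filter
            (fun A' => CompleteIn A' (fun a b => (a, b) ∈ R) E),
            (∏ a ∈ A', p a) * ∏ a ∈ A \ A', (1 - p a)) *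
        ∑ B'' ∈ (Eplus ∩ Eminus).powerset.filter
            (fun B'' => GroundedIn (E ∪ B'') (fun a b => (a, b) ∈ R) E),
            (∏ a ∈ B'', p a) * ∏ b ∈ (Eplus ∩ Eminus) \ B'', (1 - p b) :=
  stmt12_general A R p E hcf Eplus Eminus hEp hEm
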